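/- arXiv:2201.08316 — 3 statements merged into one kernel-verified Lean document; each statement's English description precedes it below -/
import Mathlib

section
/- Let X and Y be Polish, c : X × Y → [0,∞) continuous, μ ∈ P(X), ν ∈ P(Y) with T_c(μ,ν) < ∞, and let π ∈ C(μ,ν) be an optimal plan. Let X̃ ⊂ X and Ỹ ⊂ Y be Borel and Polish subspaces with μ(X̃) = ν(Ỹ) = 1, let c̃ be the restriction of c to X̃ × Ỹ, and let Γ̃ = supp π ∩ (X̃ × Ỹ). Then every Kantorovich potential f̃ ∈ S_c̃(μ,ν) of the restricted problem admits a Kantorovich potential f ∈ S_c(μ,ν) of the original problem such that f agrees with f̃ on pr_X(Γ̃) and the conjugates f^c and f̃^c̃ agree on pr_Y(Γ̃). -/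
open MeasureTheory Filter Set Topology
open scoped ENNReal NNReal Manifold

noncomputable section

/-- The topological support of a Borel measure: points all of whose open
neighborhoods have positive measure. -/
def msupport {X : Type*} [TopologicalSpace X] [MeasurableSpace X]
    (μ : Measure X) : Set X :=
  {x | ∀ U : Set X, IsOpen U → x ∈ U → 0 < μ U}

/-- `π` is a coupling (transport plan) between `μ` and `ν`. -/
def IsCoupling {X Y : Type*} [MeasurableSpace X] [MeasurableSpace Y]
    (π : Measure (X × Y)) (μ : Measure X) (ν : Measure Y) : Prop :=
  π.map Prod.fst = μ ∧ π.map Prod.snd = ν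

/-- The optimal transport cost `T_c(μ, ν)`. -/
def transportCost {X Y : Type*} [MeasurableSpace X] [MeasurableSpace Y]
    (c : X → Y → ℝ) (μ : Measure X) (ν : Measure Y) : ℝ≥0∞ :=
  ⨅ (π : Measure (X × Y)) (_ : IsCoupling π μ ν),
    ∫⁻ p, ENNReal.ofReal (c p.1 p.2) ∂π

/-- `π` is an optimal transport plan between `μ` and `ν` for the cost `c`. -/
def IsOptimalPlan {X Y : Type*} [MeasurableSpace X] [MeasurableSpace Y]
    (c : X → Y → ℝ) (μ : Measure X) (ν : Measure Y) (π : Measure (X × Y)) : Prop :=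
  IsCoupling π μ ν ∧
    ∫⁻ p, ENNReal.ofReal (c p.1 p.2) ∂π = transportCost c μ ν

/-- The `c`-transform of a function `f : X → ℝ ∪ {-∞}`, namely
`f^c(y) = inf_x (c(x,y) - f(x))`. -/
def cTransform {X Y : Type*} (c : X → Y → ℝ) (f : X → EReal) : Y → EReal :=
  fun y => ⨅ x, ((c x y : ℝ) : EReal) - f x

/-- The `c`-transform of a function `g : Y → ℝ ∪ {-∞}`, namely
`g^c(x) = inf_y (c(x,y) - g(y))`. -/
def cTransformY {X Y : Type*} (c : X → Y → ℝ) (g : Y → EReal) : X → EReal :=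
  fun x => ⨅ y, ((c x y : ℝ) : EReal) - g y

/-- `f : X → ℝ ∪ {-∞}` is `c`-concave on `X`: it is the `c`-transform of some
`g : Y → ℝ ∪ {-∞}` and is not identically `-∞`. -/
def CConcave {X Y : Type*} (c : X → Y → ℝ) (f : X → EReal) : Prop :=
  (∃ g : Y → EReal, (∀ y, g y ≠ ⊤) ∧ f = cTransformY c g) ∧
    (∀ x, f x ≠ ⊤) ∧ (∃ x, f x ≠ ⊥)

/-- The `c`-subdifferential `∂_c f = {(x,y) | f(x) + f^c(y) = c(x,y)}`. -/
def cSubdiff {X Y : Type*} (c : X → Y → ℝ) (f : X → EReal) : Set (X × Y) :=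
  {p | f p.1 + cTransform c f p.2 = ((c p.1 p.2 : ℝ) : EReal)}

/-- `f` is a (generalized) Kantorovich potential for `(c, μ, ν)`: it is
`c`-concave and satisfies `f ⊕ f^c = c` almost surely with respect to every
optimal transport plan (which, for `T_c(μ,ν) < ∞`, is equivalent to
`∫ (f ⊕ f^c) dπ = T_c(μ,ν)` for every optimal `π`, since `f ⊕ f^c ≤ c`). -/
def IsKantorovichPotential {X Y : Type*} [MeasurableSpace X] [MeasurableSpace Y]
    (c : X → Y → ℝ) (μ : Measure X) (ν : Measure Y) (f : X → EReal) : Prop :=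
  CConcave c f ∧
    ∀ π : Measure (X × Y), IsOptimalPlan c μ ν π →
      ∀ᵐ p ∂π, f p.1 + cTransform c f p.2 = ((c p.1 p.2 : ℝ) : EReal)

/-- The plan `π` induces regularity on `U` with respect to the compact set `K`. -/
def InducesRegularityOn {X Y : Type*} [TopologicalSpace X] [TopologicalSpace Y]
    [MeasurableSpace X] [MeasurableSpace Y]
    (π : Measure (X × Y)) (U : Set X) (K : Set Y) : Prop :=
  IsCompact K ∧
    (Prod.fst '' msupport π) ∩ U = Prod.fst '' (msupport π ∩ (U ×ˢ K))

/-- The plan `π` induces regularity at the point `x ∈ supp μ`: it induces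
regularity on some relatively open neighborhood `U ⊆ supp μ` of `x`. -/
def InducesRegularityAt {X Y : Type*} [TopologicalSpace X] [TopologicalSpace Y]
    [MeasurableSpace X] [MeasurableSpace Y]
    (π : Measure (X × Y)) (μ : Measure X) (x : X) : Prop :=
  ∃ U : Set X, x ∈ U ∧ (∃ V : Set X, IsOpen V ∧ U = V ∩ msupport μ) ∧
    ∃ K : Set Y, InducesRegularityOn π U K

/-- `F` is a decomposition of the set `S` into its connected components. -/
def IsComponentDecomp {X : Type*} [TopologicalSpace X] {ι : Type*}
    (S : Set X) (F : ι → Set X) : Prop :=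
  (⋃ i, F i) = S ∧ Pairwise (fun i j => Disjoint (F i) (F j)) ∧
    ∀ i, ∃ x ∈ S, F i = connectedComponentIn S x

/-- A transport plan `π` is degenerate (with respect to decompositions `F`, `G`
of the supports of `μ` and `ν` into connected components). -/
def IsDegenerate {X Y : Type*} [MeasurableSpace X] [MeasurableSpace Y] {ι κ : Type*}
    (F : ι → Set X) (G : κ → Set Y) (μ : Measure X) (ν : Measure Y)
    (π : Measure (X × Y)) : Prop :=
  ∃ (I' : Set ι) (J' : Set κ),
    0 < (∑' i : I', μ (F i.1)) ∧
    (∑' i : I', μ (F i.1)) = (∑' i : I', ∑' j : J', π (F i.1 ×ˢ G j.1)) ∧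
    (∑' i : I', ∑' j : J', π (F i.1 ×ˢ G j.1)) = (∑' j : J', ν (G j.1)) ∧
    (∑' j : J', ν (G j.1)) < 1

end

/-! `f̃` is `c̃`-concave, hence `f̃ = (f̃^c̃)^c̃`. Extend `g̃ = f̃^c̃` by `-∞` off `Ỹ` and put
`f = g^c`: the extension only adds `+∞` terms to the infimum, so `f = f̃` on `X̃`, and
`g ≤ f^c ≤ f̃^c̃ = g̃` on `Ỹ`. Every coupling of `μ` and `ν` is carried by `X̃ × Ỹ`, so pulling
plans back along the inclusion identifies the couplings, the costs and the optimal plans of the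
two problems, and the identity `f̃ ⊕ f̃^c̃ = c̃` a.e. transfers to `f ⊕ f^c = c`. -/

lemma EReal.le_coe_sub_comm {r : ℝ} {a b : EReal} (h : a ≤ r - b) : b ≤ r - a := by
  rw [EReal.le_sub_iff_add_le (.inr (EReal.coe_ne_bot r)) (.inr (EReal.coe_ne_top r))] at h ⊢
  rwa [add_comm]

lemma EReal.coe_sub_ne_top (r : ℝ) {a : EReal} (ha : a ≠ ⊥) : (r : EReal) - a ≠ ⊤ := by
  induction a using EReal.rec with
  | bot => exact absurd rfl ha
  | top => simp
  | coe a => exact EReal.coe_ne_top (r - a)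

section CTransform

variable {X Y : Type*} (c : X → Y → ℝ)

lemma le_cTransform_cTransformY (g : Y → EReal) (y : Y) :
    g y ≤ cTransform c (cTransformY c g) y :=
  le_iInf fun x => EReal.le_coe_sub_comm (iInf_le (fun y' => (c x y' : EReal) - g y') y)

lemma le_cTransformY_cTransform (f : X → EReal) (x : X) :
    f x ≤ cTransformY c (cTransform c f) x :=
  le_iInf fun y => EReal.le_coe_sub_comm (iInf_le (fun x' => (c x' y : EReal) - f x') x)

lemma cTransformY_anti {g g' : Y → EReal} (h : g ≤ g') : cTransformY c g' ≤ cTransformY c g :=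
  fun _ => iInf_mono fun y => EReal.sub_le_sub le_rfl (h y)

lemma cTransformY_cTransform_cTransformY (g : Y → EReal) :
    cTransformY c (cTransform c (cTransformY c g)) = cTransformY c g :=
  le_antisymm (cTransformY_anti c (le_cTransform_cTransformY c g))
    (le_cTransformY_cTransform c (cTransformY c g))

variable {c}

lemma CConcave.cTransformY_cTransform {f : X → EReal} (hf : CConcave c f) :
    cTransformY c (cTransform c f) = f := by
  obtain ⟨⟨g, -, rfl⟩, -⟩ := hf
  exact cTransformY_cTransform_cTransformY c g

lemma cTransform_ne_top {f : X → EReal} {x : X} (hx : f x ≠ ⊥) (y : Y) :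
    cTransform c f y ≠ ⊤ :=
  ne_top_of_le_ne_top (EReal.coe_sub_ne_top _ hx)
    (iInf_le (fun x' => (c x' y : EReal) - f x') x)

lemma CConcave.exists_cTransform_ne_bot {f : X → EReal} (hf : CConcave c f) :
    ∃ y, cTransform c f y ≠ ⊥ := by
  obtain ⟨x, -⟩ := hf.2.2
  by_contra! h
  refine hf.2.1 x ?_
  rw [← hf.cTransformY_cTransform]
  exact iInf_eq_top.2 fun y => by rw [h y, EReal.coe_sub_bot]

end CTransform

section Extension

open Function

variable {X Y X' Y' : Type*} (c : X → Y → ℝ) {i : X' → X} {j : Y' → Y}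

lemma cTransformY_extend_bot (hj : Injective j) (g : Y' → EReal) (x : X) :
    cTransformY c (extend j g ⊥) x = ⨅ y', (c x (j y') : EReal) - g y' := by
  refine le_antisymm (le_iInf fun y' => ?_) (le_iInf fun y => ?_)
  · rw [← hj.extend_apply g ⊥ y']
    exact iInf_le _ (j y')
  · by_cases hy : ∃ y', j y' = y
    · obtain ⟨y', rfl⟩ := hy
      simpa only [hj.extend_apply] using iInf_le _ y'
    · rw [extend_apply' _ _ _ hy, Pi.bot_apply, EReal.coe_sub_bot]
      exact le_top

lemma cTransform_le_cTransform_comp (f : X → EReal) (y' : Y') :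
    cTransform c f (j y') ≤ cTransform (fun x' y' => c (i x') (j y')) (f ∘ i) y' :=
  le_iInf fun x' => iInf_le _ (i x')

theorem CConcave.exists_extend {ft : X' → EReal} (hj : Injective j)
    (hft : CConcave (fun x' y' => c (i x') (j y')) ft) :
    ∃ f : X → EReal, CConcave c f ∧ f ∘ i = ft ∧
      cTransform c f ∘ j = cTransform (fun x' y' => c (i x') (j y')) ft := by
  set gt := cTransform (fun x' y' => c (i x') (j y')) ft
  set g : Y → EReal := extend j gt ⊥
  have hg : ∀ y', g (j y') = gt y' := hj.extend_apply gt ⊥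
  have hg_off : ∀ y, (¬∃ y', j y' = y) → g y = ⊥ := fun y hy => extend_apply' gt ⊥ y hy
  have hfi : cTransformY c g ∘ i = ft := by
    funext x'
    rw [comp_apply, cTransformY_extend_bot c hj, ← hft.cTransformY_cTransform]
    rfl
  obtain ⟨x₀, hx₀⟩ := hft.2.2
  obtain ⟨y₀, hy₀⟩ := hft.exists_cTransform_ne_bot
  refine ⟨cTransformY c g, ⟨⟨g, fun y => ?_, rfl⟩, fun x => ?_, i x₀, ?_⟩, hfi, ?_⟩
  · by_cases hy : ∃ y', j y' = y
    · obtain ⟨y', rfl⟩ := hy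
      exact hg y' ▸ cTransform_ne_top hx₀ y'
    · exact hg_off y hy ▸ bot_ne_top
  · exact ne_top_of_le_ne_top (EReal.coe_sub_ne_top _ (hg y₀ ▸ hy₀)) (iInf_le _ (j y₀))
  · rwa [← comp_apply (f := cTransformY c g), hfi]
  · funext y'
    refine le_antisymm ?_ (hg y' ▸ le_cTransform_cTransformY c g (j y'))
    calc cTransform c (cTransformY c g) (j y')
        ≤ cTransform (fun x' y' => c (i x') (j y')) (cTransformY c g ∘ i) y' :=
          cTransform_le_cTransform_comp c _ y'
      _ = gt y' := by rw [hfi]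

end Extension

section Embedding

variable {X Y X' Y' : Type*} [MeasurableSpace X] [MeasurableSpace Y]
  {i : X' → X} {j : Y' → Y} {μ : Measure X} {ν : Measure Y} {π : Measure (X × Y)}

lemma IsCoupling.ae_mem_range_prodMap (hπ : IsCoupling π μ ν)
    (hμ : ∀ᵐ x ∂μ, x ∈ range i) (hν : ∀ᵐ y ∂ν, y ∈ range j) :
    ∀ᵐ p ∂π, p ∈ range (Prod.map i j) := by
  rw [range_prodMap]
  have h₁ := ae_of_ae_map measurable_fst.aemeasurable (hπ.1 ▸ hμ)
  have h₂ := ae_of_ae_map measurable_snd.aemeasurable (hπ.2 ▸ hν)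
  filter_upwards [h₁, h₂] with p hp₁ hp₂ using ⟨hp₁, hp₂⟩

variable [MeasurableSpace X'] [MeasurableSpace Y']

lemma MeasurableEmbedding.map_comap_of_ae_mem (hi : MeasurableEmbedding i)
    (hμ : ∀ᵐ x ∂μ, x ∈ range i) : (μ.comap i).map i = μ := by
  rw [hi.map_comap, Measure.restrict_eq_self_of_ae_mem hμ]

lemma MeasureTheory.Measure.map_fst_map_prodMap (hi : Measurable i) (hj : Measurable j)
    (σ : Measure (X' × Y')) :
    (σ.map (Prod.map i j)).map Prod.fst = (σ.map Prod.fst).map i := by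
  rw [Measure.map_map measurable_fst (hi.prodMap hj), Measure.map_map hi measurable_fst]
  rfl

lemma MeasureTheory.Measure.map_snd_map_prodMap (hi : Measurable i) (hj : Measurable j)
    (σ : Measure (X' × Y')) :
    (σ.map (Prod.map i j)).map Prod.snd = (σ.map Prod.snd).map j := by
  rw [Measure.map_map measurable_snd (hi.prodMap hj), Measure.map_map hj measurable_snd]
  rfl

lemma IsCoupling.map_comap_prodMap (hi : MeasurableEmbedding i) (hj : MeasurableEmbedding j)
    (hμ : ∀ᵐ x ∂μ, x ∈ range i) (hν : ∀ᵐ y ∂ν, y ∈ range j)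
    (hπ : IsCoupling π μ ν) :
    (π.comap (Prod.map i j)).map (Prod.map i j) = π :=
  (hi.prodMap hj).map_comap_of_ae_mem (hπ.ae_mem_range_prodMap hμ hν)

lemma IsCoupling.comap_prodMap (hi : MeasurableEmbedding i) (hj : MeasurableEmbedding j)
    (hμ : ∀ᵐ x ∂μ, x ∈ range i) (hν : ∀ᵐ y ∂ν, y ∈ range j)
    (hπ : IsCoupling π μ ν) :
    IsCoupling (π.comap (Prod.map i j)) (μ.comap i) (ν.comap j) := by
  have hπ' := hπ.map_comap_prodMap hi hj hμ hν
  constructor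
  · rw [← hi.comap_map (Measure.map _ _),
      ← Measure.map_fst_map_prodMap hi.measurable hj.measurable, hπ', hπ.1]
  · rw [← hj.comap_map (Measure.map _ _),
      ← Measure.map_snd_map_prodMap hi.measurable hj.measurable, hπ', hπ.2]

lemma IsCoupling.map_prodMap (hi : MeasurableEmbedding i) (hj : MeasurableEmbedding j)
    (hμ : ∀ᵐ x ∂μ, x ∈ range i) (hν : ∀ᵐ y ∂ν, y ∈ range j)
    {σ : Measure (X' × Y')}
    (hσ : IsCoupling σ (μ.comap i) (ν.comap j)) : IsCoupling (σ.map (Prod.map i j)) μ ν := by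
  constructor
  · rw [Measure.map_fst_map_prodMap hi.measurable hj.measurable, hσ.1,
      hi.map_comap_of_ae_mem hμ]
  · rw [Measure.map_snd_map_prodMap hi.measurable hj.measurable, hσ.2,
      hj.map_comap_of_ae_mem hν]

lemma transportCost_comap (c : X → Y → ℝ) (hi : MeasurableEmbedding i)
    (hj : MeasurableEmbedding j)
    (hμ : ∀ᵐ x ∂μ, x ∈ range i) (hν : ∀ᵐ y ∂ν, y ∈ range j) :
    transportCost (fun x' y' => c (i x') (j y')) (μ.comap i) (ν.comap j) =
      transportCost c μ ν := by
  have hcost (σ : Measure (X' × Y')) : ∫⁻ q, ENNReal.ofReal (c (i q.1) (j q.2)) ∂σ =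
      ∫⁻ p, ENNReal.ofReal (c p.1 p.2) ∂(σ.map (Prod.map i j)) :=
    (hi.prodMap hj).lintegral_map (f := fun p : X × Y => ENNReal.ofReal (c p.1 p.2)) |>.symm
  unfold transportCost
  refine le_antisymm (le_iInf₂ fun π hπ => ?_) (le_iInf₂ fun σ hσ => ?_)
  · have hσ := hπ.comap_prodMap hi hj hμ hν
    rw [← hπ.map_comap_prodMap hi hj hμ hν, ← hcost]
    exact iInf₂_le (π.comap (Prod.map i j)) hσ
  · rw [hcost]
    exact iInf₂_le (σ.map (Prod.map i j)) (hσ.map_prodMap hi hj hμ hν)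

lemma IsOptimalPlan.comap_prodMap {c : X → Y → ℝ} (hi : MeasurableEmbedding i)
    (hj : MeasurableEmbedding j)
    (hμ : ∀ᵐ x ∂μ, x ∈ range i) (hν : ∀ᵐ y ∂ν, y ∈ range j)
    (hπ : IsOptimalPlan c μ ν π) :
    IsOptimalPlan (fun x' y' => c (i x') (j y')) (μ.comap i) (ν.comap j)
      (π.comap (Prod.map i j)) := by
  refine ⟨hπ.1.comap_prodMap hi hj hμ hν, ?_⟩
  rw [transportCost_comap c hi hj hμ hν, ← hπ.2]
  conv_rhs => rw [← hπ.1.map_comap_prodMap hi hj hμ hν]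
  exact (hi.prodMap hj).lintegral_map (f := fun p : X × Y => ENNReal.ofReal (c p.1 p.2)) |>.symm

theorem IsKantorovichPotential.of_comap {c : X → Y → ℝ} (hi : MeasurableEmbedding i)
    (hj : MeasurableEmbedding j) (hμ : ∀ᵐ x ∂μ, x ∈ range i) (hν : ∀ᵐ y ∂ν, y ∈ range j)
    {f : X → EReal} {ft : X' → EReal}
    (hft : IsKantorovichPotential (fun x' y' => c (i x') (j y')) (μ.comap i) (ν.comap j) ft)
    (hf : CConcave c f) (hfi : f ∘ i = ft)
    (hfj : cTransform c f ∘ j = cTransform (fun x' y' => c (i x') (j y')) ft) :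
    IsKantorovichPotential c μ ν f := by
  refine ⟨hf, fun π hπ => ?_⟩
  have hae := hft.2 _ (hπ.comap_prodMap hi hj hμ hν)
  rw [← hπ.1.map_comap_prodMap hi hj hμ hν, (hi.prodMap hj).ae_map_iff]
  filter_upwards [hae] with q hq
  rwa [← hfj, ← hfi] at hq

end Embedding

theorem stmt3_general {X Y : Type*}
    [TopologicalSpace X] [MeasurableSpace X]
    [TopologicalSpace Y] [MeasurableSpace Y]
    (c : X → Y → ℝ)
    (μ : Measure X) (ν : Measure Y) [IsProbabilityMeasure μ] [IsProbabilityMeasure ν]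
    (π : Measure (X × Y))
    (Xt : Set X) (Yt : Set Y) (hXtm : MeasurableSet Xt) (hYtm : MeasurableSet Yt)
    (hXt1 : μ Xt = 1) (hYt1 : ν Yt = 1)
    (ft : ↥Xt → EReal)
    (hft : IsKantorovichPotential (fun (x : ↥Xt) (y : ↥Yt) => c x.1 y.1)
      (Measure.comap Subtype.val μ) (Measure.comap Subtype.val ν) ft) :
    ∃ f : X → EReal,
      IsKantorovichPotential c μ ν f ∧
      (∀ p : X × Y, p ∈ msupport π ∩ (Xt ×ˢ Yt) →
        ∀ hx : p.1 ∈ Xt, f p.1 = ft ⟨p.1, hx⟩) ∧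
      (∀ p : X × Y, p ∈ msupport π ∩ (Xt ×ˢ Yt) →
        ∀ hy : p.2 ∈ Yt,
          cTransform c f p.2 =
            cTransform (fun (x : ↥Xt) (y : ↥Yt) => c x.1 y.1) ft ⟨p.2, hy⟩) := by
  have hμ : ∀ᵐ x ∂μ, x ∈ Set.range ((↑) : Xt → X) := by
    rwa [Subtype.range_coe, ae_mem_iff_measure_eq hXtm.nullMeasurableSet, measure_univ]
  have hν : ∀ᵐ y ∂ν, y ∈ Set.range ((↑) : Yt → Y) := by
    rwa [Subtype.range_coe, ae_mem_iff_measure_eq hYtm.nullMeasurableSet, measure_univ]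
  obtain ⟨f, hf, hfi, hfj⟩ :=
    hft.1.exists_extend (i := Subtype.val) (j := Subtype.val) c Subtype.val_injective
  refine ⟨f, hft.of_comap (MeasurableEmbedding.subtype_coe hXtm)
    (MeasurableEmbedding.subtype_coe hYtm) hμ hν hf hfi hfj, ?_, ?_⟩
  · exact fun p _ hx => congrFun hfi ⟨p.1, hx⟩
  · exact fun p _ hy => congrFun hfj ⟨p.2, hy⟩

/-- Extension of Kantorovich potentials from Borel Polish
subspaces of full mass to the whole space. -/
theorem stmt3 {X Y : Type*}
    [TopologicalSpace X] [PolishSpace X] [MeasurableSpace X] [BorelSpace X]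
    [TopologicalSpace Y] [PolishSpace Y] [MeasurableSpace Y] [BorelSpace Y]
    (c : X → Y → ℝ) (hc0 : ∀ x y, 0 ≤ c x y)
    (hccont : Continuous fun p : X × Y => c p.1 p.2)
    (μ : Measure X) (ν : Measure Y) [IsProbabilityMeasure μ] [IsProbabilityMeasure ν]
    (hT : transportCost c μ ν < ⊤)
    (π : Measure (X × Y)) (hπ : IsOptimalPlan c μ ν π)
    (Xt : Set X) (Yt : Set Y) (hXtm : MeasurableSet Xt) (hYtm : MeasurableSet Yt)
    (hXtP : PolishSpace ↥Xt) (hYtP : PolishSpace ↥Yt)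
    (hXt1 : μ Xt = 1) (hYt1 : ν Yt = 1)
    (ft : ↥Xt → EReal)
    (hft : IsKantorovichPotential (fun (x : ↥Xt) (y : ↥Yt) => c x.1 y.1)
      (Measure.comap Subtype.val μ) (Measure.comap Subtype.val ν) ft) :
    ∃ f : X → EReal,
      IsKantorovichPotential c μ ν f ∧
      (∀ p : X × Y, p ∈ msupport π ∩ (Xt ×ˢ Yt) →
        ∀ hx : p.1 ∈ Xt, f p.1 = ft ⟨p.1, hx⟩) ∧
      (∀ p : X × Y, p ∈ msupport π ∩ (Xt ×ˢ Yt) →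
        ∀ hy : p.2 ∈ Yt,
          cTransform c f p.2 =
            cTransform (fun (x : ↥Xt) (y : ↥Yt) => c x.1 y.1) ft ⟨p.2, hy⟩) :=
  stmt3_general c μ ν π Xt Yt hXtm hYtm hXt1 hYt1 ft hft
end

section
/- Let X and Y be Polish, c : X × Y → [0,∞) continuous, μ ∈ P(X), ν ∈ P(Y) with T_c(μ,ν) < ∞, and let π ∈ C(μ,ν) be optimal. Let x ∈ supp μ and suppose there exists a sequence (x_n, y_n)_{n∈ℕ} ⊂ supp π with x_n → x and y_n → ∞. If (1) there is a sequence (x̃_n)_{n∈ℕ} ⊂ X converging to x with lim_{n→∞} (c(x̃_n, y_n) − c(x_n, y_n)) = −∞, then every Kantorovich potential f ∈ S_c(μ,ν) equals −∞ everywhere on C_∞ = limsup_{n→∞} C(x̃_n, y_n). If additionally (2) C_∞ contains an open set U with x ∈ cl(U), then x lies in the boundary of supp μ. -/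
/-!
If `f = g^c` is a Kantorovich potential with `f(x')` finite and `g(y₀)` finite, then
`f(x') + c(u, v) ≤ c(x', v) + f(u) ≤ c(x', v) + c(u, y₀) - g(y₀)` on the `c`-subdifferential of `f`,
which has full `π`-measure. The outer inequality involves only the continuous cost, so it holds
on a closed set, hence on all of `supp π`, in particular at `(x_n, y_n)`. Similarly, for
`(z, w) ∈ supp π`, two-point `c`-cyclical monotonicity gives
`c(z, w) + c(x_n, y_n) ≤ c(z, y_n) + c(x_n, w)`. If `x'` (resp. `z`) lies in `C(x̃_n, y_n)` for
infinitely many `n`, then `c(x', y_n) - c(x_n, y_n) ≤ c(x̃_n, y_n) - c(x_n, y_n) → -∞` along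
those `n`, while the remaining terms stay bounded as `x_n → x`. This forces `f(x') = -∞`, and it
rules out points of `supp π` lying over `U`; but if `x` were interior to `supp μ`, the open set `U`
would carry `μ`-mass and such points would exist.

Cyclical monotonicity is the usual swap argument: if it failed at `p, q ∈ supp π`, exchanging the
second coordinates of small masses near `p` and near `q` would keep the marginals and strictly
lower the cost.
-/

open MeasureTheory Filter Set Topology
open scoped ENNReal NNReal Manifold

open ProbabilityTheory

lemma msupport_eq_support {Z : Type*} [TopologicalSpace Z] [MeasurableSpace Z]
    (ρ : Measure Z) : msupport ρ = ρ.support := by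
  rw [Measure.support_eq_forall_isOpen]
  ext z
  exact forall_congr' fun _ => forall_comm

section Swap

variable {X Y : Type*} [MeasurableSpace X] [MeasurableSpace Y]

lemma IsCoupling.isProbabilityMeasure {π : Measure (X × Y)} {μ : Measure X} {ν : Measure Y}
    [IsProbabilityMeasure μ] (h : IsCoupling π μ ν) : IsProbabilityMeasure π := by
  have hfst : π.fst = μ := h.1
  constructor
  rw [← Measure.fst_univ, hfst, measure_univ]

lemma transportCost_le_lintegral {c : X → Y → ℝ} {μ : Measure X} {ν : Measure Y}
    {π : Measure (X × Y)} (h : IsCoupling π μ ν) :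
    transportCost c μ ν ≤ ∫⁻ p, ENNReal.ofReal (c p.1 p.2) ∂π :=
  iInf₂_le π h

lemma IsCoupling.sub_add {π σ σ' : Measure (X × Y)} {μ : Measure X} {ν : Measure Y}
    [IsFiniteMeasure π] (h : IsCoupling π μ ν) (hle : σ ≤ π) (hfst : σ'.fst = σ.fst)
    (hsnd : σ'.snd = σ.snd) : IsCoupling (π - σ + σ') μ ν := by
  have := isFiniteMeasure_of_le π hle
  constructor
  · change (π - σ + σ').fst = μ
    rw [Measure.fst_add, hfst, ← Measure.fst_add, Measure.sub_add_cancel_of_le hle]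
    exact h.1
  · change (π - σ + σ').snd = ν
    rw [Measure.snd_add, hsnd, ← Measure.snd_add, Measure.sub_add_cancel_of_le hle]
    exact h.2

noncomputable def crossedPlan (ρ : Measure ((X × Y) × (X × Y))) : Measure (X × Y) :=
  ρ.map (fun zw => (zw.1.1, zw.2.2)) + ρ.map (fun zw => (zw.2.1, zw.1.2))

lemma fst_crossedPlan (ρ : Measure ((X × Y) × (X × Y))) :
    (crossedPlan ρ).fst = (ρ.fst + ρ.snd).fst := by
  simp only [crossedPlan, Measure.fst, Measure.snd, Measure.map_add _ _ measurable_fst]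
  rw [Measure.map_map measurable_fst (by fun_prop), Measure.map_map measurable_fst (by fun_prop),
    Measure.map_map measurable_fst measurable_fst, Measure.map_map measurable_fst measurable_snd]
  rfl

lemma snd_crossedPlan (ρ : Measure ((X × Y) × (X × Y))) :
    (crossedPlan ρ).snd = (ρ.fst + ρ.snd).snd := by
  simp only [crossedPlan, Measure.fst, Measure.snd, Measure.map_add _ _ measurable_snd]
  rw [Measure.map_map measurable_snd (by fun_prop), Measure.map_map measurable_snd (by fun_prop),
    Measure.map_map measurable_snd measurable_fst, Measure.map_map measurable_snd measurable_snd,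
    add_comm]
  rfl

lemma lintegral_crossedPlan_add_le {F : X × Y → ℝ≥0∞} (hF : Measurable F)
    {ρ : Measure ((X × Y) × (X × Y))} [IsProbabilityMeasure ρ] {δ : ℝ≥0∞}
    (h : ∀ᵐ zw ∂ρ, F (zw.1.1, zw.2.2) + F (zw.2.1, zw.1.2) + δ ≤ F zw.1 + F zw.2) :
    ∫⁻ z, F z ∂crossedPlan ρ + δ ≤ ∫⁻ z, F z ∂(ρ.fst + ρ.snd) := by
  have hcross : ∫⁻ z, F z ∂crossedPlan ρ = ∫⁻ zw, F (zw.1.1, zw.2.2) + F (zw.2.1, zw.1.2) ∂ρ := by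
    rw [crossedPlan, lintegral_add_measure, lintegral_map hF (by fun_prop),
      lintegral_map hF (by fun_prop)]
    exact (lintegral_add_left (hF.comp (by fun_prop)) _).symm
  have hdiag : ∫⁻ z, F z ∂(ρ.fst + ρ.snd) = ∫⁻ zw, F zw.1 + F zw.2 ∂ρ := by
    rw [Measure.fst, Measure.snd, lintegral_add_measure, lintegral_map hF measurable_fst,
      lintegral_map hF measurable_snd]
    exact (lintegral_add_left (hF.comp measurable_fst) _).symm
  calc ∫⁻ z, F z ∂crossedPlan ρ + δ
      = ∫⁻ zw, F (zw.1.1, zw.2.2) + F (zw.2.1, zw.1.2) + δ ∂ρ := by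
        rw [hcross, lintegral_add_right _ measurable_const, lintegral_const, measure_univ, mul_one]
    _ ≤ ∫⁻ zw, F zw.1 + F zw.2 ∂ρ := lintegral_mono_ae h
    _ = ∫⁻ z, F z ∂(ρ.fst + ρ.snd) := hdiag.symm

lemma IsCoupling.swap {π : Measure (X × Y)} {μ : Measure X} {ν : Measure Y}
    {ρ : Measure ((X × Y) × (X × Y))} {t : ℝ≥0∞} [IsFiniteMeasure π] (h : IsCoupling π μ ν)
    (hle : t • (ρ.fst + ρ.snd) ≤ π) :
    IsCoupling (π - t • (ρ.fst + ρ.snd) + t • crossedPlan ρ) μ ν :=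
  h.sub_add hle
    ((Measure.map_smul t _ _).trans ((congrArg (t • ·) (fst_crossedPlan ρ)).trans
      (Measure.map_smul t _ _).symm))
    ((Measure.map_smul t _ _).trans ((congrArg (t • ·) (snd_crossedPlan ρ)).trans
      (Measure.map_smul t _ _).symm))

lemma lintegral_sub_add_lt {Z : Type*} [MeasurableSpace Z] {π σ σ' : Measure Z}
    [IsFiniteMeasure π] {F : Z → ℝ≥0∞} (hle : σ ≤ π) (hπ : ∫⁻ z, F z ∂π ≠ ⊤)
    (hlt : ∫⁻ z, F z ∂σ' < ∫⁻ z, F z ∂σ) : ∫⁻ z, F z ∂(π - σ + σ') < ∫⁻ z, F z ∂π := by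
  have := isFiniteMeasure_of_le π hle
  have hsub : ∫⁻ z, F z ∂(π - σ) ≠ ⊤ :=
    ne_top_of_le_ne_top hπ (lintegral_mono' Measure.sub_le le_rfl)
  calc ∫⁻ z, F z ∂(π - σ + σ') = ∫⁻ z, F z ∂(π - σ) + ∫⁻ z, F z ∂σ' := lintegral_add_measure ..
    _ < ∫⁻ z, F z ∂(π - σ) + ∫⁻ z, F z ∂σ := ENNReal.add_lt_add_left hsub hlt
    _ = ∫⁻ z, F z ∂π := by rw [← lintegral_add_measure, Measure.sub_add_cancel_of_le hle]

lemma lintegral_swap_lt {F : X × Y → ℝ≥0∞} (hF : Measurable F) {π : Measure (X × Y)}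
    [IsFiniteMeasure π] {ρ : Measure ((X × Y) × (X × Y))} [IsProbabilityMeasure ρ]
    {t δ : ℝ≥0∞} (hle : t • (ρ.fst + ρ.snd) ≤ π) (ht : t ≠ 0) (hπ : ∫⁻ z, F z ∂π ≠ ⊤)
    (hδ : δ ≠ 0)
    (hcross : ∀ᵐ zw ∂ρ, F (zw.1.1, zw.2.2) + F (zw.2.1, zw.1.2) + δ ≤ F zw.1 + F zw.2) :
    ∫⁻ z, F z ∂(π - t • (ρ.fst + ρ.snd) + t • crossedPlan ρ) < ∫⁻ z, F z ∂π := by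
  have hstep : ∫⁻ z, F z ∂(t • crossedPlan ρ) + t * δ ≤ ∫⁻ z, F z ∂(t • (ρ.fst + ρ.snd)) := by
    rw [lintegral_smul_measure, lintegral_smul_measure, smul_eq_mul, smul_eq_mul, ← mul_add]
    gcongr
    exact lintegral_crossedPlan_add_le hF hcross
  have hdiag : ∫⁻ z, F z ∂(t • (ρ.fst + ρ.snd)) ≠ ⊤ :=
    ne_top_of_le_ne_top hπ (lintegral_mono' hle le_rfl)
  refine lintegral_sub_add_lt hle hπ ((ENNReal.lt_add_right ?_ (mul_ne_zero ht hδ)).trans_le hstep)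
  exact ne_top_of_le_ne_top hdiag (le_self_add.trans hstep)

end Swap

lemma smul_cond_le_smul {Z : Type*} [MeasurableSpace Z] {π : Measure Z} {A : Set Z}
    {t r : ℝ≥0∞} (h : t ≤ r * π A) : t • π[|A] ≤ r • π := by
  rw [ProbabilityTheory.cond, smul_smul]
  calc (t * (π A)⁻¹) • π.restrict A ≤ r • π.restrict A := by
        gcongr
        exact ENNReal.div_le_of_le_mul h
    _ ≤ r • π := by gcongr; exact Measure.restrict_le_self

section Masses

variable {Z : Type*} [TopologicalSpace Z] [MeasurableSpace Z]

lemma exists_isProbabilityMeasure_smul_fst_add_snd_le {π : Measure Z} [IsFiniteMeasure π]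
    {p q : Z} (hp : p ∈ π.support) (hq : q ∈ π.support) {A B : Set Z} (hA : A ∈ 𝓝 p)
    (hB : B ∈ 𝓝 q) (hAm : MeasurableSet A) (hBm : MeasurableSet B) :
    ∃ ρ : Measure (Z × Z), IsProbabilityMeasure ρ ∧ (∀ᵐ zw ∂ρ, zw ∈ A ×ˢ B) ∧
      ∃ t : ℝ≥0∞, t ≠ 0 ∧ t • (ρ.fst + ρ.snd) ≤ π := by
  have hπA : 0 < π A := (Measure.mem_support_iff_forall p).1 hp A hA
  have hπB : 0 < π B := (Measure.mem_support_iff_forall q).1 hq B hB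
  have := cond_isProbabilityMeasure (μ := π) hπA.ne'
  have := cond_isProbabilityMeasure (μ := π) hπB.ne'
  have hfst : (π[|A].prod π[|B]).fst = π[|A] := Measure.fst_prod
  have hsnd : (π[|A].prod π[|B]).snd = π[|B] := Measure.snd_prod
  set t : ℝ≥0∞ := min (π A) (π B) / 2 with ht
  have hhalf (C : Set Z) (hC : min (π A) (π B) ≤ π C) : t • π[|C] ≤ (2⁻¹ : ℝ≥0∞) • π :=
    smul_cond_le_smul (by rw [ht, ENNReal.div_eq_inv_mul]; gcongr)
  refine ⟨π[|A].prod π[|B], inferInstance, ?_, t, ?_, ?_⟩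
  · filter_upwards [ae_of_ae_map measurable_fst.aemeasurable (hfst ▸ ae_cond_mem hAm),
      ae_of_ae_map measurable_snd.aemeasurable (hsnd ▸ ae_cond_mem hBm)] with zw hz hw
    exact ⟨hz, hw⟩
  · exact (ENNReal.div_pos (lt_min hπA hπB).ne' ENNReal.ofNat_ne_top).ne'
  · calc t • ((π[|A].prod π[|B]).fst + (π[|A].prod π[|B]).snd) = t • π[|A] + t • π[|B] := by
          rw [hfst, hsnd, smul_add]
      _ ≤ (2⁻¹ : ℝ≥0∞) • π + (2⁻¹ : ℝ≥0∞) • π :=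
          add_le_add (hhalf A (min_le_left _ _)) (hhalf B (min_le_right _ _))
      _ = π := by rw [← add_smul, ENNReal.inv_two_add_inv_two, one_smul]

end Masses

section Transport

variable {X Y : Type*} [TopologicalSpace X] [TopologicalSpace Y]
  [MeasurableSpace X] [MeasurableSpace Y] {c : X → Y → ℝ}
  {μ : Measure X} {ν : Measure Y} {π : Measure (X × Y)}

theorem IsOptimalPlan.cost_add_cost_le_of_mem_support [OpensMeasurableSpace (X × Y)]
    [IsProbabilityMeasure μ]
    (hc0 : ∀ x y, 0 ≤ c x y) (hc : Continuous fun p : X × Y => c p.1 p.2)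
    (hT : transportCost c μ ν < ⊤) (hπ : IsOptimalPlan c μ ν π) {p q : X × Y}
    (hp : p ∈ π.support) (hq : q ∈ π.support) :
    c p.1 p.2 + c q.1 q.2 ≤ c p.1 q.2 + c q.1 p.2 := by
  by_contra! hgap
  obtain ⟨δ, hδpos, hδ⟩ : ∃ δ > 0, c p.1 q.2 + c q.1 p.2 + δ < c p.1 p.2 + c q.1 q.2 :=
    ⟨_, half_pos (sub_pos.2 hgap), by linarith⟩
  have hS : IsOpen {zw : (X × Y) × (X × Y) |
      c zw.1.1 zw.2.2 + c zw.2.1 zw.1.2 + δ < c zw.1.1 zw.1.2 + c zw.2.1 zw.2.2} := by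
    have hcomp {f : (X × Y) × (X × Y) → X × Y} (hf : Continuous f) :
        Continuous fun zw => c (f zw).1 (f zw).2 := hc.comp hf
    exact isOpen_lt (((hcomp (f := fun zw => (zw.1.1, zw.2.2)) (by fun_prop)).add
      (hcomp (f := fun zw => (zw.2.1, zw.1.2)) (by fun_prop))).add continuous_const)
      ((hcomp continuous_fst).add (hcomp continuous_snd))
  obtain ⟨A, B, hA, hB, hpA, hqB, hAB⟩ :=
    isOpen_prod_iff.1 hS p q hδ
  have := hπ.1.isProbabilityMeasure
  obtain ⟨ρ, _, hρ, t, ht, hle⟩ := exists_isProbabilityMeasure_smul_fst_add_snd_le hp hq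
    (hA.mem_nhds hpA) (hB.mem_nhds hqB) hA.measurableSet hB.measurableSet
  set F : X × Y → ℝ≥0∞ := fun z => ENNReal.ofReal (c z.1 z.2)
  have hF : Measurable F := hc.measurable.ennreal_ofReal
  have hcross : ∀ᵐ zw ∂ρ,
      F (zw.1.1, zw.2.2) + F (zw.2.1, zw.1.2) + ENNReal.ofReal δ ≤ F zw.1 + F zw.2 := by
    filter_upwards [hρ] with zw hzw
    have hlt : c zw.1.1 zw.2.2 + c zw.2.1 zw.1.2 + δ < c zw.1.1 zw.1.2 + c zw.2.1 zw.2.2 :=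
      hAB hzw
    simp only [F, ← ENNReal.ofReal_add (hc0 _ _) (hc0 _ _)]
    rw [← ENNReal.ofReal_add (by linarith [hc0 zw.1.1 zw.2.2, hc0 zw.2.1 zw.1.2]) hδpos.le]
    exact ENNReal.ofReal_le_ofReal hlt.le
  have hlt := lintegral_swap_lt hF hle ht (hπ.2 ▸ hT.ne) (ENNReal.ofReal_pos.2 hδpos).ne' hcross
  exact hlt.not_ge (hπ.2.trans_le (transportCost_le_lintegral (hπ.1.swap hle)))

end Transport

section Sequences

variable {X Y : Type*} [TopologicalSpace X] [TopologicalSpace Y] {c : X → Y → ℝ}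
  {x : X} {xs xt : ℕ → X} {ys : ℕ → Y}

lemma exists_cost_add_lt_of_frequently (hc : Continuous fun p : X × Y => c p.1 p.2)
    (hxs : Tendsto xs atTop (𝓝 x))
    (h1 : Tendsto (fun n => c (xt n) (ys n) - c (xs n) (ys n)) atTop atBot) {x' : X}
    (hx' : {n | c x' (ys n) ≤ c (xt n) (ys n)}.Infinite) (y : Y) (r : ℝ) :
    ∃ n, c x' (ys n) + c (xs n) y < c (xs n) (ys n) + r := by
  have hbdd : ∀ᶠ n in atTop, c (xs n) y < c x y + 1 :=
    ((hc.comp (Continuous.prodMk_left y)).tendsto x |>.comp hxs).eventually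
      (gt_mem_nhds (lt_add_one _))
  have hdrop : ∀ᶠ n in atTop, c (xt n) (ys n) - c (xs n) (ys n) < r - (c x y + 1) :=
    h1.eventually (eventually_lt_atBot _)
  obtain ⟨n, hn, hb, hd⟩ :=
    (Nat.frequently_atTop_iff_infinite.2 hx' |>.and_eventually (hbdd.and hdrop)).exists
  exact ⟨n, by linarith⟩

end Sequences

section Potentials

variable {X Y : Type*} {c : X → Y → ℝ} {f : X → EReal}

lemma CConcave.exists_le_cost_sub (hf : CConcave c f) :
    ∃ (y₀ : Y) (w : ℝ), ∀ u, f u ≤ ((c u y₀ - w : ℝ) : EReal) := by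
  obtain ⟨⟨g, hg, rfl⟩, htop, x₀, -⟩ := hf
  obtain ⟨y₀, hy₀⟩ : ∃ y₀, ((c x₀ y₀ : ℝ) : EReal) - g y₀ ≠ ⊤ := by
    by_contra! h
    exact htop x₀ (iInf_eq_top.2 h)
  have hg₀ : g y₀ ≠ ⊥ := by
    rintro h
    simp [h] at hy₀
  refine ⟨y₀, (g y₀).toReal, fun u => ?_⟩
  calc cTransformY c g u ≤ ((c u y₀ : ℝ) : EReal) - g y₀ := iInf_le _ y₀
    _ = _ := by rw [EReal.coe_sub, EReal.coe_toReal (hg y₀) hg₀]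

lemma add_cost_le_of_mem_cSubdiff {z : X × Y} (hz : z ∈ cSubdiff c f) {x' : X} {a b : ℝ}
    (ha : f x' = a) (hb : f z.1 ≤ b) : a + c z.1 z.2 ≤ c x' z.2 + b := by
  have hfc : cTransform c f z.2 ≤ ((c x' z.2 - a : ℝ) : EReal) := by
    rw [EReal.coe_sub, ← ha]
    exact iInf_le _ x'
  have hsum := add_le_add hb hfc
  rw [show f z.1 + cTransform c f z.2 = c z.1 z.2 from hz, ← EReal.coe_add,
    EReal.coe_le_coe_iff] at hsum
  linarith

end Potentials

section Regularity

variable {X Y : Type*} [TopologicalSpace X] [TopologicalSpace Y]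
  [MeasurableSpace X] [MeasurableSpace Y] {c : X → Y → ℝ}
  {μ : Measure X} {ν : Measure Y} {π : Measure (X × Y)}
  {x : X} {xs xt : ℕ → X} {ys : ℕ → Y}

theorem IsKantorovichPotential.eq_bot_of_frequently_cost_le
    (hc : Continuous fun p : X × Y => c p.1 p.2) (hπ : IsOptimalPlan c μ ν π)
    {f : X → EReal} (hf : IsKantorovichPotential c μ ν f)
    (hmem : ∀ n, (xs n, ys n) ∈ π.support) (hxs : Tendsto xs atTop (𝓝 x))
    (h1 : Tendsto (fun n => c (xt n) (ys n) - c (xs n) (ys n)) atTop atBot) {x' : X}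
    (hx' : {n | c x' (ys n) ≤ c (xt n) (ys n)}.Infinite) : f x' = ⊥ := by
  obtain ⟨y₀, w, hw⟩ := hf.1.exists_le_cost_sub
  by_contra hbot
  obtain ⟨a, ha⟩ : ∃ a : ℝ, f x' = a := ⟨_, (EReal.coe_toReal (hf.1.2.1 x') hbot).symm⟩
  have hclosed : IsClosed {z : X × Y | a + c z.1 z.2 ≤ c x' z.2 + (c z.1 y₀ - w)} :=
    isClosed_le (continuous_const.add hc)
      ((hc.comp (continuous_const.prodMk continuous_snd)).add
        ((hc.comp (continuous_fst.prodMk continuous_const)).sub continuous_const))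
  have hsupp := Measure.support_subset_of_isClosed hclosed
    ((hf.2 π hπ).mono fun z hz => add_cost_le_of_mem_cSubdiff hz ha (hw z.1))
  obtain ⟨n, hn⟩ := exists_cost_add_lt_of_frequently hc hxs h1 hx' y₀ (a + w)
  have hle : a + c (xs n) (ys n) ≤ c x' (ys n) + (c (xs n) y₀ - w) := hsupp (hmem n)
  linarith

theorem mem_frontier_support_of_frequently_cost_le [OpensMeasurableSpace X]
    [OpensMeasurableSpace (X × Y)] [HereditarilyLindelofSpace (X × Y)] [IsProbabilityMeasure μ]
    (hc0 : ∀ x y, 0 ≤ c x y) (hc : Continuous fun p : X × Y => c p.1 p.2)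
    (hT : transportCost c μ ν < ⊤) (hπ : IsOptimalPlan c μ ν π) (hx : x ∈ μ.support)
    (hmem : ∀ n, (xs n, ys n) ∈ π.support) (hxs : Tendsto xs atTop (𝓝 x))
    (h1 : Tendsto (fun n => c (xt n) (ys n) - c (xs n) (ys n)) atTop atBot) {U : Set X}
    (hU : IsOpen U) (hUC : U ⊆ {x' | {n | c x' (ys n) ≤ c (xt n) (ys n)}.Infinite})
    (hxU : x ∈ closure U) : x ∈ frontier μ.support := by
  rw [frontier, Measure.isClosed_support.closure_eq]
  refine ⟨hx, fun hint => ?_⟩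
  obtain ⟨w, hw, hwU⟩ := mem_closure_iff.1 hxU _ isOpen_interior hint
  have hμU : 0 < μ U :=
    (Measure.mem_support_iff_forall w).1 (interior_subset hw) U (hU.mem_nhds hwU)
  have hπU : 0 < π (Prod.fst ⁻¹' U) := by
    rwa [← Measure.map_apply measurable_fst hU.measurableSet, hπ.1.1]
  obtain ⟨z, hzU, hz⟩ := Measure.nonempty_inter_support_of_pos hπU
  obtain ⟨n, hn⟩ := exists_cost_add_lt_of_frequently hc hxs h1 (hUC hzU) z.2 (c z.1 z.2)
  linarith [hπ.cost_add_cost_le_of_mem_support hc0 hc hT hz (hmem n)]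

end Regularity

theorem stmt14_general {X Y : Type*}
    [TopologicalSpace X] [PolishSpace X] [MeasurableSpace X] [BorelSpace X]
    [TopologicalSpace Y] [PolishSpace Y] [MeasurableSpace Y] [BorelSpace Y]
    (c : X → Y → ℝ) (hc0 : ∀ x y, 0 ≤ c x y)
    (hccont : Continuous fun p : X × Y => c p.1 p.2)
    (μ : Measure X) (ν : Measure Y) [IsProbabilityMeasure μ]
    (hT : transportCost c μ ν < ⊤)
    (π : Measure (X × Y)) (hπ : IsOptimalPlan c μ ν π)
    (x : X) (hx : x ∈ msupport μ)
    (xs : ℕ → X) (ys : ℕ → Y)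
    (hmem : ∀ n, (xs n, ys n) ∈ msupport π)
    (hxs : Tendsto xs atTop (nhds x))
    (xt : ℕ → X)
    -- condition 1: `c(x̃_n, y_n) - c(x_n, y_n) → -∞`
    (h1 : Tendsto (fun n => c (xt n) (ys n) - c (xs n) (ys n)) atTop atBot) :
    (∀ f : X → EReal, IsKantorovichPotential c μ ν f →
      ∀ x' ∈ {x' : X | {n : ℕ | c x' (ys n) ≤ c (xt n) (ys n)}.Infinite}, f x' = ⊥) ∧
    -- condition 2 implies that `x` is a boundary point of `supp μ`
    ((∃ U : Set X, IsOpen U ∧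
        U ⊆ {x' : X | {n : ℕ | c x' (ys n) ≤ c (xt n) (ys n)}.Infinite} ∧
        x ∈ closure U) →
      x ∈ frontier (msupport μ)) := by
  simp only [msupport_eq_support] at hx hmem ⊢
  exact ⟨fun f hf x' hx' => hf.eq_bot_of_frequently_cost_le hccont hπ hmem hxs h1 hx',
    fun ⟨U, hU, hUC, hxU⟩ =>
      mem_frontier_support_of_frequently_cost_le hc0 hccont hT hπ hx hmem hxs h1 hU hUC hxU⟩

/-- **Lemma: interior regularity.** If mass near `x` is sent
towards infinity and the cost along a perturbed sequence drops to `-∞`, every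
Kantorovich potential is `-∞` on the asymptotic region of dominated cost
`C_∞ = limsup_n C(x̃_n, y_n)`; if moreover `C_∞` contains an open set touching
`x`, then `x` is a boundary point of `supp μ`. -/
theorem stmt14 {X Y : Type*}
    [TopologicalSpace X] [PolishSpace X] [MeasurableSpace X] [BorelSpace X]
    [TopologicalSpace Y] [PolishSpace Y] [MeasurableSpace Y] [BorelSpace Y]
    (c : X → Y → ℝ) (hc0 : ∀ x y, 0 ≤ c x y)
    (hccont : Continuous fun p : X × Y => c p.1 p.2)
    (μ : Measure X) (ν : Measure Y) [IsProbabilityMeasure μ] [IsProbabilityMeasure ν]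
    (hT : transportCost c μ ν < ⊤)
    (π : Measure (X × Y)) (hπ : IsOptimalPlan c μ ν π)
    (x : X) (hx : x ∈ msupport μ)
    (xs : ℕ → X) (ys : ℕ → Y)
    (hmem : ∀ n, (xs n, ys n) ∈ msupport π)
    (hxs : Tendsto xs atTop (nhds x))
    -- `y_n → ∞`: every compact set contains only finitely many of the `y_n`
    (hys : ∀ K : Set Y, IsCompact K → {n : ℕ | ys n ∈ K}.Finite)
    (xt : ℕ → X) (hxt : Tendsto xt atTop (nhds x))
    -- condition 1: `c(x̃_n, y_n) - c(x_n, y_n) → -∞`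
    (h1 : Tendsto (fun n => c (xt n) (ys n) - c (xs n) (ys n)) atTop atBot) :
    (∀ f : X → EReal, IsKantorovichPotential c μ ν f →
      ∀ x' ∈ {x' : X | {n : ℕ | c x' (ys n) ≤ c (xt n) (ys n)}.Infinite}, f x' = ⊥) ∧
    -- condition 2 implies that `x` is a boundary point of `supp μ`
    ((∃ U : Set X, IsOpen U ∧
        U ⊆ {x' : X | {n : ℕ | c x' (ys n) ≤ c (xt n) (ys n)}.Infinite} ∧
        x ∈ closure U) →
      x ∈ frontier (msupport μ)) :=
  stmt14_general c hc0 hccont μ ν hT π hπ x hx xs ys hmem hxs xt h1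
end

section
/- Let X = Y be Polish, μ = ν ∈ P(X) with supp μ = X₁ ∪ X₂, and let c : X × X → [0,∞) be continuous and symmetric with c(x,x) = 0 for all x ∈ X. If Δ = inf{c(x₁,x₂) : x₁ ∈ X₁, x₂ ∈ X₂} > 0, then for all a, b ∈ ℝ with |a − b| ≤ Δ there exists a Kantorovich potential f_{a,b} ∈ S_c(μ,μ) such that f_{a,b} = a on X₁ and f_{a,b} = b on X₂. -/
open MeasureTheory Filter Set Topology
open scoped ENNReal NNReal Manifold

/-!
Since `c` vanishes on the diagonal, the identity coupling shows `T_c(μ, μ) = 0`, so every optimal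
plan is concentrated on zero-cost pairs of `supp μ × supp μ`; as `Δ > 0`, such a pair lies in
`X₁ × X₁` or in `X₂ × X₂`. The function `φ = a` on `X₁`, `b` on `X₂` satisfies
`φ x - φ y ≤ c x y` on `supp μ` because `|a - b| ≤ Δ`, hence its extension
`f x = inf_{y ∈ supp μ} (c x y + φ y)` is `c`-concave with `f = φ` and `f^c = -φ` on `supp μ`.
Then `f x + f^c y = φ x - φ y = 0 = c x y` on every zero-cost pair of the same part.
-/

open MeasureTheory Set

section Support

variable {X : Type*} [TopologicalSpace X] [MeasurableSpace X]

theorem msupport_eq_support_s18 (μ : Measure X) : msupport μ = μ.support := by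
  rw [Measure.support_eq_forall_isOpen]
  ext x
  exact forall_congr' fun U => forall_comm

theorem ae_mem_msupport [HereditarilyLindelofSpace X] (μ : Measure X) :
    ∀ᵐ x ∂μ, x ∈ msupport μ := by
  rw [msupport_eq_support_s18]
  exact Measure.support_mem_ae

end Support

section Transport

variable {X Y : Type*} [MeasurableSpace X] [MeasurableSpace Y]

theorem IsCoupling.ae_fst {π : Measure (X × Y)} {μ : Measure X} {ν : Measure Y}
    (hπ : IsCoupling π μ ν) {p : X → Prop} (hp : ∀ᵐ x ∂μ, p x) : ∀ᵐ q ∂π, p q.1 :=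
  ae_of_ae_map measurable_fst.aemeasurable (hπ.1 ▸ hp)

theorem IsCoupling.ae_snd {π : Measure (X × Y)} {μ : Measure X} {ν : Measure Y}
    (hπ : IsCoupling π μ ν) {p : Y → Prop} (hp : ∀ᵐ y ∂ν, p y) : ∀ᵐ q ∂π, p q.2 :=
  ae_of_ae_map measurable_snd.aemeasurable (hπ.2 ▸ hp)

theorem isCoupling_map_diag (μ : Measure X) : IsCoupling (μ.map fun x => (x, x)) μ μ := by
  have hdiag : Measurable fun x : X => (x, x) := measurable_id.prodMk measurable_id
  constructor
  · rw [Measure.map_map measurable_fst hdiag]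
    exact Measure.map_id
  · rw [Measure.map_map measurable_snd hdiag]
    exact Measure.map_id

theorem transportCost_self_eq_zero {c : X → X → ℝ} (hcdiag : ∀ x, c x x = 0)
    (μ : Measure X) : transportCost c μ μ = 0 := by
  refine le_antisymm ?_ zero_le
  calc transportCost c μ μ
      ≤ ∫⁻ p, ENNReal.ofReal (c p.1 p.2) ∂(μ.map fun x => (x, x)) :=
        iInf₂_le (f := fun π (_ : IsCoupling π μ μ) => ∫⁻ p, ENNReal.ofReal (c p.1 p.2) ∂π) _
          (isCoupling_map_diag μ)
    _ ≤ ∫⁻ x, ENNReal.ofReal (c x x) ∂μ := lintegral_map_le _ _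
    _ = 0 := by simp [hcdiag]

theorem IsOptimalPlan.ae_cost_nonpos {c : X → Y → ℝ} {μ : Measure X} {ν : Measure Y}
    {π : Measure (X × Y)} (hπ : IsOptimalPlan c μ ν π) (hT : transportCost c μ ν = 0)
    (hc : Measurable fun p : X × Y => c p.1 p.2) : ∀ᵐ p ∂π, c p.1 p.2 ≤ 0 := by
  have hzero := (lintegral_eq_zero_iff hc.ennreal_ofReal).1 (hπ.2.trans hT)
  filter_upwards [hzero] with p hp
  exact ENNReal.ofReal_eq_zero.1 hp

end Transport

section CExtension

variable {X : Type*} {c : X → X → ℝ} {S : Set X} {φ : X → ℝ}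

open Classical in
/-- `x ↦ inf_{y ∈ S} (c x y + φ y)`: the dual function is `⊥` off `S`, which removes those
points from the infimum. -/
noncomputable def cExtension (c : X → X → ℝ) (S : Set X) (φ : X → ℝ) : X → EReal :=
  cTransformY c fun y => if y ∈ S then ((-φ y : ℝ) : EReal) else ⊥

theorem cExtension_le (x : X) {y : X} (hy : y ∈ S) :
    cExtension c S φ x ≤ ((c x y + φ y : ℝ) : EReal) := by
  refine (iInf_le _ y).trans_eq ?_
  beta_reduce
  rw [if_pos hy, ← EReal.coe_sub, sub_neg_eq_add]

theorem cExtension_eq (hcdiag : ∀ x ∈ S, c x x = 0)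
    (hφ : ∀ x ∈ S, ∀ y ∈ S, φ x - φ y ≤ c x y) {x : X} (hx : x ∈ S) :
    cExtension c S φ x = φ x := by
  refine le_antisymm ((cExtension_le x hx).trans_eq (by rw [hcdiag x hx, zero_add])) ?_
  refine le_iInf fun y => ?_
  beta_reduce
  by_cases hy : y ∈ S
  · rw [if_pos hy, ← EReal.coe_sub, EReal.coe_le_coe_iff]
    linarith [hφ x hx y hy]
  · rw [if_neg hy, EReal.coe_sub_bot]
    exact le_top

theorem cTransform_cExtension (hcdiag : ∀ x ∈ S, c x x = 0)
    (hφ : ∀ x ∈ S, ∀ y ∈ S, φ x - φ y ≤ c x y) {y : X} (hy : y ∈ S) :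
    cTransform c (cExtension c S φ) y = ((-φ y : ℝ) : EReal) := by
  refine le_antisymm ?_ (le_iInf fun x => ?_)
  · refine (iInf_le _ y).trans_eq ?_
    rw [cExtension_eq hcdiag hφ hy, hcdiag y hy, ← EReal.coe_sub, zero_sub]
  · calc ((-φ y : ℝ) : EReal) = ((c x y : ℝ) : EReal) - ((c x y + φ y : ℝ) : EReal) := by
          rw [← EReal.coe_sub]; ring_nf
      _ ≤ ((c x y : ℝ) : EReal) - cExtension c S φ x :=
          EReal.sub_le_sub le_rfl (cExtension_le x hy)

theorem cConcave_cExtension (hS : S.Nonempty) (hcdiag : ∀ x ∈ S, c x x = 0)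
    (hφ : ∀ x ∈ S, ∀ y ∈ S, φ x - φ y ≤ c x y) : CConcave c (cExtension c S φ) := by
  obtain ⟨z, hz⟩ := hS
  refine ⟨⟨_, fun y => ?_, rfl⟩, fun x => ?_, ⟨z, ?_⟩⟩
  · split_ifs
    exacts [EReal.coe_ne_top _, bot_ne_top]
  · exact ((cExtension_le x hz).trans_lt (EReal.coe_lt_top _)).ne
  · rw [cExtension_eq hcdiag hφ hz]
    exact EReal.coe_ne_bot _

end CExtension

theorem isKantorovichPotential_cExtension {X : Type*} [TopologicalSpace X]
    [HereditarilyLindelofSpace X] [MeasurableSpace X] {c : X → X → ℝ}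
    (hc : Measurable fun p : X × X => c p.1 p.2) (hc0 : ∀ x y, 0 ≤ c x y)
    (hcdiag : ∀ x, c x x = 0) {μ : Measure X} {φ : X → ℝ} (hS : (msupport μ).Nonempty)
    (hφ : ∀ x ∈ msupport μ, ∀ y ∈ msupport μ, φ x - φ y ≤ c x y)
    (hφ_zero : ∀ x ∈ msupport μ, ∀ y ∈ msupport μ, c x y = 0 → φ x = φ y) :
    IsKantorovichPotential c μ μ (cExtension c (msupport μ) φ) := by
  refine ⟨cConcave_cExtension hS (fun x _ => hcdiag x) hφ, fun π hπ => ?_⟩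
  filter_upwards [hπ.ae_cost_nonpos (transportCost_self_eq_zero hcdiag μ) hc,
    hπ.1.ae_fst (ae_mem_msupport μ), hπ.1.ae_snd (ae_mem_msupport μ)] with p hp hp₁ hp₂
  have hcp : c p.1 p.2 = 0 := le_antisymm hp (hc0 _ _)
  rw [cExtension_eq (fun x _ => hcdiag x) hφ hp₁,
    cTransform_cExtension (fun x _ => hcdiag x) hφ hp₂, ← EReal.coe_add,
    hφ_zero _ hp₁ _ hp₂ hcp, hcp, add_neg_cancel]

section Separated

variable {X : Type*} {c : X → X → ℝ} {X₁ X₂ : Set X} {Δ : ℝ}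

theorem sub_le_cost_of_separated [DecidablePred (· ∈ X₁)] (hc0 : ∀ x y, 0 ≤ c x y)
    (hcsymm : ∀ x y, c x y = c y x)
    (hsep : ∀ x₁ ∈ X₁, ∀ x₂ ∈ X₂, Δ ≤ c x₁ x₂) {a b : ℝ} (hab : |a - b| ≤ Δ)
    {x y : X} (hx : x ∈ X₁ ∪ X₂) (hy : y ∈ X₁ ∪ X₂) :
    ((if x ∈ X₁ then a else b) - if y ∈ X₁ then a else b) ≤ c x y := by
  have hab' := abs_le.1 hab
  by_cases hx₁ : x ∈ X₁ <;> by_cases hy₁ : y ∈ X₁ <;> simp only [hx₁, hy₁, if_true, if_false]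
  · linarith [hc0 x y]
  · linarith [hsep x hx₁ y (hy.resolve_left hy₁)]
  · linarith [hsep y hy₁ x (hx.resolve_left hx₁), hcsymm x y]
  · linarith [hc0 x y]

theorem mem_iff_mem_of_cost_eq_zero (hcsymm : ∀ x y, c x y = c y x)
    (hsep : ∀ x₁ ∈ X₁, ∀ x₂ ∈ X₂, Δ ≤ c x₁ x₂) (hΔ : 0 < Δ)
    {x y : X} (hx : x ∈ X₁ ∪ X₂) (hy : y ∈ X₁ ∪ X₂) (hxy : c x y = 0) : x ∈ X₁ ↔ y ∈ X₁ := by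
  constructor
  · intro hx₁
    by_contra hy₁
    linarith [hsep x hx₁ y (hy.resolve_left hy₁)]
  · intro hy₁
    by_contra hx₁
    linarith [hsep y hy₁ x (hx.resolve_left hx₁), hcsymm x y]

end Separated

theorem stmt18_general {X : Type*}
    [TopologicalSpace X] [PolishSpace X] [MeasurableSpace X] [BorelSpace X]
    (c : X → X → ℝ) (hc0 : ∀ x y, 0 ≤ c x y)
    (hccont : Continuous fun p : X × X => c p.1 p.2)
    (hcsymm : ∀ x y, c x y = c y x) (hcdiag : ∀ x, c x x = 0)
    (μ : Measure X)
    (X₁ X₂ : Set X) (hsupp : msupport μ = X₁ ∪ X₂)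
    (hΔ : 0 < sInf {r : ℝ | ∃ x₁ ∈ X₁, ∃ x₂ ∈ X₂, c x₁ x₂ = r})
    (a b : ℝ) (hab : |a - b| ≤ sInf {r : ℝ | ∃ x₁ ∈ X₁, ∃ x₂ ∈ X₂, c x₁ x₂ = r}) :
    ∃ f : X → EReal, IsKantorovichPotential c μ μ f ∧
      (∀ x ∈ X₁, f x = (a : EReal)) ∧ (∀ x ∈ X₂, f x = (b : EReal)) := by
  classical
  set Δ := sInf {r : ℝ | ∃ x₁ ∈ X₁, ∃ x₂ ∈ X₂, c x₁ x₂ = r} with hΔ_def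
  obtain ⟨-, z, hz, -⟩ : {r : ℝ | ∃ x₁ ∈ X₁, ∃ x₂ ∈ X₂, c x₁ x₂ = r}.Nonempty :=
    nonempty_iff_ne_empty.2 fun h => by rw [hΔ_def, h, Real.sInf_empty] at hΔ; exact hΔ.false
  have hsep : ∀ x₁ ∈ X₁, ∀ x₂ ∈ X₂, Δ ≤ c x₁ x₂ := fun x₁ h₁ x₂ h₂ =>
    csInf_le ⟨0, by rintro _ ⟨_, -, _, -, rfl⟩; exact hc0 _ _⟩ ⟨x₁, h₁, x₂, h₂, rfl⟩
  have hnot₁ : ∀ x ∈ X₂, x ∉ X₁ := fun x h₂ h₁ => by linarith [hsep x h₁ x h₂, hcdiag x]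
  set φ : X → ℝ := fun x => if x ∈ X₁ then a else b
  have hφ : ∀ x ∈ msupport μ, ∀ y ∈ msupport μ, φ x - φ y ≤ c x y := fun x hx y hy =>
    sub_le_cost_of_separated hc0 hcsymm hsep hab (hsupp ▸ hx) (hsupp ▸ hy)
  have hφ_zero : ∀ x ∈ msupport μ, ∀ y ∈ msupport μ, c x y = 0 → φ x = φ y :=
    fun x hx y hy hxy => by
      simp only [φ, mem_iff_mem_of_cost_eq_zero hcsymm hsep hΔ (hsupp ▸ hx) (hsupp ▸ hy) hxy]
  have hf : ∀ x ∈ msupport μ, cExtension c (msupport μ) φ x = φ x :=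
    fun _ => cExtension_eq (fun x _ => hcdiag x) hφ
  refine ⟨cExtension c (msupport μ) φ, isKantorovichPotential_cExtension hccont.measurable hc0
    hcdiag ⟨z, hsupp ▸ Or.inl hz⟩ hφ hφ_zero, fun x hx => ?_, fun x hx => ?_⟩
  · rw [hf x (hsupp ▸ Or.inl hx), show φ x = a from if_pos hx]
  · rw [hf x (hsupp ▸ Or.inr hx), show φ x = b from if_neg (hnot₁ x hx)]

/-- Non-uniqueness under strictly cost-separated components:
if `supp μ = X₁ ∪ X₂` with `Δ = inf c(X₁, X₂) > 0`, then for all `a, b` with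
`|a - b| ≤ Δ` there is a Kantorovich potential equal to `a` on `X₁` and `b` on
`X₂`. -/
theorem stmt18 {X : Type*}
    [TopologicalSpace X] [PolishSpace X] [MeasurableSpace X] [BorelSpace X]
    (c : X → X → ℝ) (hc0 : ∀ x y, 0 ≤ c x y)
    (hccont : Continuous fun p : X × X => c p.1 p.2)
    (hcsymm : ∀ x y, c x y = c y x) (hcdiag : ∀ x, c x x = 0)
    (μ : Measure X) [IsProbabilityMeasure μ]
    (X₁ X₂ : Set X) (hsupp : msupport μ = X₁ ∪ X₂)
    (hΔ : 0 < sInf {r : ℝ | ∃ x₁ ∈ X₁, ∃ x₂ ∈ X₂, c x₁ x₂ = r})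
    (a b : ℝ) (hab : |a - b| ≤ sInf {r : ℝ | ∃ x₁ ∈ X₁, ∃ x₂ ∈ X₂, c x₁ x₂ = r}) :
    ∃ f : X → EReal, IsKantorovichPotential c μ μ f ∧
      (∀ x ∈ X₁, f x = (a : EReal)) ∧ (∀ x ∈ X₂, f x = (b : EReal)) :=
  stmt18_general c hc0 hccont hcsymm hcdiag μ X₁ X₂ hsupp hΔ a b hab
end
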